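/- Contraction of a closed loop with odd total dimer parity annihilates the state: let N ≥ 3, χ ∈ H_N, p, q ∈ {−1,+1}, and let ω := (id_{H_{N−2}} ⊗ β)(χ) be the contraction of the last two qubits of χ, where β(|ab⟩) = δ_{a0}δ_{b0} + δ_{a1}δ_{b1}. Then: (i) if (γ_{2N−3} + i p γ_{2N−2})χ = 0 and (γ_{2N−1} + i q γ_{2N})χ = 0 with p q = −1, then ω = 0; (ii) if (γ_{2N−3} + i p γ_{2N})χ = 0 and (γ_{2N−2} + i q γ_{2N−1})χ = 0 with (p,q) ≠ (+1,+1), then ω = 0. -/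
import Mathlib


open Complex Matrix

noncomputable section

/-- Computational basis labels for `L` qubits: bit strings `b : Fin L → Fin 2`. -/
abbrev QBasis (L : ℕ) := Fin L → Fin 2

/-- State vectors of `L` qubits (the Hilbert space `H_L = (ℂ²)^{⊗L}`
in its computational basis coordinates). -/
abbrev QVec (L : ℕ) := QBasis L → ℂ

/-- Operators on `L` qubits, written as matrices in the computational basis. -/
abbrev QOp (L : ℕ) := Matrix (QBasis L) (QBasis L) ℂ

/-- The inner product `⟨φ, ψ⟩`, conjugate-linear in the first argument. -/
def qInner {L : ℕ} (φ ψ : QVec L) : ℂ := ∑ b, (starRingEnd ℂ) (φ b) * ψ b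

/-- `+1` for bit `0`, `-1` for bit `1`. -/
def bitSign (x : Fin 2) : ℂ := if x = 0 then 1 else -1

/-- Flip the `k`-th bit of a bit string. -/
def flipBit {L : ℕ} (k : Fin L) (b : QBasis L) : QBasis L :=
  Function.update b k (1 - b k)

/-- Pauli `X` on the (1-based) site `k`; the identity if `k` is out of range. -/
def siteX (L : ℕ) (k : ℕ) : QOp L :=
  if h : 1 ≤ k ∧ k ≤ L then
    Matrix.of fun b c => if c = flipBit ⟨k - 1, by omega⟩ b then 1 else 0
  else 1

/-- Pauli `Y` on the (1-based) site `k`; the identity if `k` is out of range. -/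
def siteY (L : ℕ) (k : ℕ) : QOp L :=
  if h : 1 ≤ k ∧ k ≤ L then
    Matrix.of fun b c =>
      if c = flipBit ⟨k - 1, by omega⟩ b then -Complex.I * bitSign (b ⟨k - 1, by omega⟩)
      else 0
  else 1

/-- Pauli `Z` on the (1-based) site `k`; the identity if `k` is out of range. -/
def siteZ (L : ℕ) (k : ℕ) : QOp L :=
  if h : 1 ≤ k ∧ k ≤ L then
    Matrix.diagonal fun b => bitSign (b ⟨k - 1, by omega⟩)
  else 1

/-- The ordered operator product `f 1 * f 2 * ⋯ * f n`. -/
def opProd (L : ℕ) (f : ℕ → QOp L) (n : ℕ) : QOp L :=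
  ((List.range n).map fun i => f (i + 1)).prod

/-- The Jordan–Wigner Majorana operator `γ_m` (1-based, `1 ≤ m ≤ 2L`):
`γ_{2k-1} = Z_1 ⋯ Z_{k-1} X_k` and `γ_{2k} = Z_1 ⋯ Z_{k-1} Y_k`. -/
def majorana (L : ℕ) (m : ℕ) : QOp L :=
  opProd L (siteZ L) ((m + 1) / 2 - 1) *
    (if m % 2 = 1 then siteX L ((m + 1) / 2) else siteY L ((m + 1) / 2))

/-- The total parity operator `P = Z_1 Z_2 ⋯ Z_L`. -/
def totalParity (L : ℕ) : QOp L := opProd L (siteZ L) L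


/-- Extend a bit string on `N - 2` qubits by the two last bits `x`, `y`. -/
def appendTwo (N : ℕ) (b : QBasis (N - 2)) (x y : Fin 2) : QBasis N :=
  fun j => if h : (j : ℕ) < N - 2 then b ⟨(j : ℕ), h⟩
    else if (j : ℕ) = N - 2 then x else y

/-- The contraction of the last two qubits of `χ`: the vector
`ω = (id ⊗ β)(χ)` with `β = ⟨00| + ⟨11|`, i.e.
`ω(b) = χ(b,0,0) + χ(b,1,1)`. -/
def contractLast (N : ℕ) (χ : QVec N) : QVec (N - 2) :=
  fun b => χ (appendTwo N b 0 0) + χ (appendTwo N b 1 1)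
/-- Z-string eigenvalue: product of bit signs over the first `r` sites. -/
def zProdFun (L r : ℕ) (b : QBasis L) : ℂ :=
  ∏ i : Fin L, if (i : ℕ) < r then bitSign (b i) else 1

lemma bitSign_zero : bitSign 0 = 1 := rfl
lemma bitSign_one : bitSign 1 = -1 := rfl

lemma bitSign_ne_zero (x : Fin 2) : bitSign x ≠ 0 := by
  fin_cases x <;> simp [bitSign]

lemma zProdFun_ne_zero (L r : ℕ) (b : QBasis L) : zProdFun L r b ≠ 0 := by
  unfold zProdFun
  refine Finset.prod_ne_zero_iff.mpr fun i _ => ?_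
  split
  · exact bitSign_ne_zero _
  · exact one_ne_zero

lemma zProdFun_succ (L n : ℕ) (hn : n < L) (b : QBasis L) :
    zProdFun L (n + 1) b = zProdFun L n b * bitSign (b ⟨n, hn⟩) := by
  unfold zProdFun
  have : ∀ i : Fin L, (if (i : ℕ) < n + 1 then bitSign (b i) else 1) =
      (if (i : ℕ) < n then bitSign (b i) else 1) *
      (if i = ⟨n, hn⟩ then bitSign (b i) else 1) := by
    intro i
    rcases lt_trichotomy (i : ℕ) n with h | h | h
    · rw [if_pos (by omega), if_pos h, if_neg (by simp [Fin.ext_iff]; omega), mul_one]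
    · rw [if_pos (by omega), if_neg (by omega), if_pos (by simp [Fin.ext_iff, h]), one_mul]
    · rw [if_neg (by omega), if_neg (by omega), if_neg (by simp [Fin.ext_iff]; omega), mul_one]
  rw [Finset.prod_congr rfl fun i _ => this i, Finset.prod_mul_distrib]
  congr 1
  simp

lemma opProd_succ (L : ℕ) (f : ℕ → QOp L) (n : ℕ) :
    opProd L f (n + 1) = opProd L f n * f (n + 1) := by
  simp [opProd, List.range_succ]

lemma opProd_siteZ_mulVec (L r : ℕ) (hr : r ≤ L) (χ : QVec L) (b : QBasis L) :
    (opProd L (siteZ L) r *ᵥ χ) b = zProdFun L r b * χ b := by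
  induction r generalizing χ with
  | zero =>
    have h1 : opProd L (siteZ L) 0 = 1 := by simp [opProd]
    have h2 : zProdFun L 0 b = 1 := by unfold zProdFun; simp
    simp [h1, h2]
  | succ n ih =>
    have hn : n < L := hr
    rw [opProd_succ, ← Matrix.mulVec_mulVec]
    have hz : siteZ L (n + 1) = Matrix.diagonal fun c => bitSign (c ⟨n, hn⟩) := by
      rw [siteZ, dif_pos ⟨by omega, hr⟩]
      congr
    rw [hz]
    have hv : (Matrix.diagonal (fun c : QBasis L => bitSign (c ⟨n, hn⟩)) *ᵥ χ) =
        fun c => bitSign (c ⟨n, hn⟩) * χ c := by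
      funext c; rw [Matrix.mulVec_diagonal]
    rw [hv, ih (by omega), zProdFun_succ L n hn b]
    ring

lemma siteX_mulVec (L k : ℕ) (h1 : 1 ≤ k) (h2 : k ≤ L) (χ : QVec L) (b : QBasis L) :
    (siteX L k *ᵥ χ) b = χ (flipBit ⟨k - 1, by omega⟩ b) := by
  rw [siteX, dif_pos ⟨h1, h2⟩]
  simp [Matrix.mulVec, dotProduct]

lemma siteY_mulVec (L k : ℕ) (h1 : 1 ≤ k) (h2 : k ≤ L) (χ : QVec L) (b : QBasis L) :
    (siteY L k *ᵥ χ) b =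
      -Complex.I * bitSign (b ⟨k - 1, by omega⟩) * χ (flipBit ⟨k - 1, by omega⟩ b) := by
  rw [siteY, dif_pos ⟨h1, h2⟩]
  simp [Matrix.mulVec, dotProduct]

lemma maj_odd_mulVec (L k : ℕ) (h1 : 1 ≤ k) (h2 : k ≤ L) (χ : QVec L) (b : QBasis L) :
    (majorana L (2 * k - 1) *ᵥ χ) b =
      zProdFun L (k - 1) b * χ (flipBit ⟨k - 1, by omega⟩ b) := by
  have hd : (2 * k - 1 + 1) / 2 = k := by omega
  have hm : (2 * k - 1) % 2 = 1 := by omega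
  rw [majorana, hd, hm, if_pos rfl, ← Matrix.mulVec_mulVec,
    opProd_siteZ_mulVec L (k - 1) (by omega)]
  congr 1
  exact siteX_mulVec L k h1 h2 χ b

lemma maj_even_mulVec (L k : ℕ) (h1 : 1 ≤ k) (h2 : k ≤ L) (χ : QVec L) (b : QBasis L) :
    (majorana L (2 * k) *ᵥ χ) b =
      zProdFun L (k - 1) b *
        (-Complex.I * bitSign (b ⟨k - 1, by omega⟩) * χ (flipBit ⟨k - 1, by omega⟩ b)) := by
  have hd : (2 * k + 1) / 2 = k := by omega
  have hm : (2 * k) % 2 = 0 := by omega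
  rw [majorana, hd, hm, if_neg (by omega), ← Matrix.mulVec_mulVec,
    opProd_siteZ_mulVec L (k - 1) (by omega)]
  congr 1
  exact siteY_mulVec L k h1 h2 χ b

lemma appendTwo_at_mid (N : ℕ) (hN : 3 ≤ N) (b : QBasis (N - 2)) (x y : Fin 2) :
    appendTwo N b x y ⟨N - 2, by omega⟩ = x := by
  simp only [appendTwo]
  rw [dif_neg (by omega)]
  simp

lemma appendTwo_at_last (N : ℕ) (hN : 3 ≤ N) (b : QBasis (N - 2)) (x y : Fin 2) :
    appendTwo N b x y ⟨N - 1, by omega⟩ = y := by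
  simp only [appendTwo]
  rw [dif_neg (by omega), if_neg (by omega)]

lemma flip_mid (N : ℕ) (hN : 3 ≤ N) (b : QBasis (N - 2)) (x y : Fin 2) :
    flipBit ⟨N - 2, by omega⟩ (appendTwo N b x y) = appendTwo N b (1 - x) y := by
  funext j
  rw [flipBit, Function.update_apply]
  by_cases h : j = (⟨N - 2, by omega⟩ : Fin N)
  · subst h
    rw [if_pos rfl, appendTwo_at_mid N hN, appendTwo_at_mid N hN]
  · have hv : (j : ℕ) ≠ N - 2 := fun hc => h (Fin.ext hc)
    rw [if_neg h]
    simp only [appendTwo]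
    by_cases h2 : (j : ℕ) < N - 2
    · rw [dif_pos h2, dif_pos h2]
    · rw [dif_neg h2, dif_neg h2, if_neg hv, if_neg hv]

lemma flip_last (N : ℕ) (hN : 3 ≤ N) (b : QBasis (N - 2)) (x y : Fin 2) :
    flipBit ⟨N - 1, by omega⟩ (appendTwo N b x y) = appendTwo N b x (1 - y) := by
  funext j
  rw [flipBit, Function.update_apply]
  by_cases h : j = (⟨N - 1, by omega⟩ : Fin N)
  · subst h
    rw [if_pos rfl, appendTwo_at_last N hN, appendTwo_at_last N hN]
  · have hv : (j : ℕ) ≠ N - 1 := fun hc => h (Fin.ext hc)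
    rw [if_neg h]
    simp only [appendTwo]
    by_cases h2 : (j : ℕ) < N - 2
    · rw [dif_pos h2, dif_pos h2]
    · have hj : (j : ℕ) = N - 2 := by have := j.isLt; omega
      rw [dif_neg h2, dif_neg h2, if_pos hj, if_pos hj]

lemma zProd_last (N : ℕ) (hN : 3 ≤ N) (b : QBasis (N - 2)) (x y : Fin 2) :
    zProdFun N (N - 1) (appendTwo N b x y) =
      zProdFun N (N - 2) (appendTwo N b x y) * bitSign x := by
  have e : N - 1 = (N - 2) + 1 := by omega
  rw [e, zProdFun_succ N (N - 2) (by omega), appendTwo_at_mid N hN]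

lemma majA (N : ℕ) (hN : 3 ≤ N) (χ : QVec N) (b : QBasis (N - 2)) (x y : Fin 2) :
    (majorana N (2 * N - 3) *ᵥ χ) (appendTwo N b x y) =
      zProdFun N (N - 2) (appendTwo N b x y) * χ (appendTwo N b (1 - x) y) := by
  have e : 2 * N - 3 = 2 * ((N - 2) + 1) - 1 := by omega
  rw [e, maj_odd_mulVec N ((N - 2) + 1) (by omega) (by omega)]
  simp only [Nat.add_sub_cancel]
  rw [flip_mid N hN]

lemma majB (N : ℕ) (hN : 3 ≤ N) (χ : QVec N) (b : QBasis (N - 2)) (x y : Fin 2) :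
    (majorana N (2 * N - 2) *ᵥ χ) (appendTwo N b x y) =
      zProdFun N (N - 2) (appendTwo N b x y) *
        (-Complex.I * bitSign x * χ (appendTwo N b (1 - x) y)) := by
  have e : 2 * N - 2 = 2 * ((N - 2) + 1) := by omega
  rw [e, maj_even_mulVec N ((N - 2) + 1) (by omega) (by omega)]
  simp only [Nat.add_sub_cancel]
  rw [flip_mid N hN, appendTwo_at_mid N hN]

lemma majC (N : ℕ) (hN : 3 ≤ N) (χ : QVec N) (b : QBasis (N - 2)) (x y : Fin 2) :
    (majorana N (2 * N - 1) *ᵥ χ) (appendTwo N b x y) =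
      zProdFun N (N - 2) (appendTwo N b x y) * bitSign x * χ (appendTwo N b x (1 - y)) := by
  have e : 2 * N - 1 = 2 * ((N - 1) + 1) - 1 := by omega
  rw [e, maj_odd_mulVec N ((N - 1) + 1) (by omega) (by omega)]
  simp only [Nat.add_sub_cancel]
  rw [flip_last N hN, zProd_last N hN]

lemma majD (N : ℕ) (hN : 3 ≤ N) (χ : QVec N) (b : QBasis (N - 2)) (x y : Fin 2) :
    (majorana N (2 * N) *ᵥ χ) (appendTwo N b x y) =
      zProdFun N (N - 2) (appendTwo N b x y) * bitSign x *
        (-Complex.I * bitSign y * χ (appendTwo N b x (1 - y))) := by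
  have e : 2 * N = 2 * ((N - 1) + 1) := by omega
  rw [e, maj_even_mulVec N ((N - 1) + 1) (by omega) (by omega)]
  simp only [Nat.add_sub_cancel]
  rw [flip_last N hN, appendTwo_at_last N hN, zProd_last N hN]

/-- contraction of a closed loop with odd total dimer parity
annihilates the state. -/
theorem odd_loop_contraction_vanishes (N : ℕ) (hN : 3 ≤ N) (χ : QVec N) (p q : ℂ)
    (hp : p = 1 ∨ p = -1) (hq : q = 1 ∨ q = -1) :
    (((majorana N (2 * N - 3) + (Complex.I * p) • majorana N (2 * N - 2)) *ᵥ χ = 0 →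
      (majorana N (2 * N - 1) + (Complex.I * q) • majorana N (2 * N)) *ᵥ χ = 0 →
      p * q = -1 → contractLast N χ = 0)) ∧
    (((majorana N (2 * N - 3) + (Complex.I * p) • majorana N (2 * N)) *ᵥ χ = 0 →
      (majorana N (2 * N - 2) + (Complex.I * q) • majorana N (2 * N - 1)) *ᵥ χ = 0 →
      ¬(p = 1 ∧ q = 1) → contractLast N χ = 0)) := by
  have f0 : (1 - (0 : Fin 2)) = 1 := rfl
  have f1 : (1 - (1 : Fin 2)) = 0 := rfl
  constructor
  · intro h1 h2 hpq
    funext b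
    have Zne : ∀ x y : Fin 2, zProdFun N (N - 2) (appendTwo N b x y) ≠ 0 :=
      fun x y => zProdFun_ne_zero N (N - 2) _
    have E1 : ∀ x y : Fin 2, (1 + p * bitSign x) * χ (appendTwo N b (1 - x) y) = 0 := by
      intro x y
      have h := congrFun h1 (appendTwo N b x y)
      simp only [Matrix.add_mulVec, Matrix.smul_mulVec, Pi.add_apply,
        Pi.smul_apply, smul_eq_mul, Pi.zero_apply] at h
      rw [majA N hN χ b x y, majB N hN χ b x y] at h
      have h' : zProdFun N (N - 2) (appendTwo N b x y) *
          ((1 + p * bitSign x) * χ (appendTwo N b (1 - x) y)) = 0 := by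
        linear_combination h + p * bitSign x *
          zProdFun N (N - 2) (appendTwo N b x y) * χ (appendTwo N b (1 - x) y) * Complex.I_sq
      exact (mul_eq_zero.mp h').resolve_left (Zne x y)
    have E2 : ∀ x y : Fin 2, (1 + q * bitSign y) * χ (appendTwo N b x (1 - y)) = 0 := by
      intro x y
      have h := congrFun h2 (appendTwo N b x y)
      simp only [Matrix.add_mulVec, Matrix.smul_mulVec, Pi.add_apply,
        Pi.smul_apply, smul_eq_mul, Pi.zero_apply] at h
      rw [majC N hN χ b x y, majD N hN χ b x y] at h
      have h' : (zProdFun N (N - 2) (appendTwo N b x y) * bitSign x) *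
          ((1 + q * bitSign y) * χ (appendTwo N b x (1 - y))) = 0 := by
        linear_combination h + q * bitSign x * bitSign y *
          zProdFun N (N - 2) (appendTwo N b x y) * χ (appendTwo N b x (1 - y)) * Complex.I_sq
      exact (mul_eq_zero.mp h').resolve_left
        (mul_ne_zero (Zne x y) (bitSign_ne_zero x))
    show contractLast N χ b = 0
    rw [contractLast]
    rcases hp with rfl | rfl <;> rcases hq with rfl | rfl
    · norm_num at hpq
    · have hA := E1 0 1
      have hB := E2 0 1
      rw [f0, bitSign_zero] at hA
      rw [f1, bitSign_one] at hB
      norm_num at hA hB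
      rw [hA, hB, add_zero]
    · have hA := E1 1 0
      have hB := E2 1 0
      rw [f1, bitSign_one] at hA
      rw [f0, bitSign_zero] at hB
      norm_num at hA hB
      rw [hA, hB, add_zero]
    · norm_num at hpq
  · intro h1 h2 hne
    funext b
    have Zne : zProdFun N (N - 2) (appendTwo N b 1 0) ≠ 0 :=
      zProdFun_ne_zero N (N - 2) _
    have e1 : χ (appendTwo N b 0 0) = p * χ (appendTwo N b 1 1) := by
      have h := congrFun h1 (appendTwo N b 1 0)
      simp only [Matrix.add_mulVec, Matrix.smul_mulVec, Pi.add_apply,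
        Pi.smul_apply, smul_eq_mul, Pi.zero_apply] at h
      rw [majA N hN χ b 1 0, majD N hN χ b 1 0, f1, f0, bitSign_one, bitSign_zero] at h
      have h' : zProdFun N (N - 2) (appendTwo N b 1 0) *
          (χ (appendTwo N b 0 0) - p * χ (appendTwo N b 1 1)) = 0 := by
        linear_combination h - p * zProdFun N (N - 2) (appendTwo N b 1 0) *
          χ (appendTwo N b 1 1) * Complex.I_sq
      have h2' := (mul_eq_zero.mp h').resolve_left Zne
      linear_combination h2'
    have e2 : χ (appendTwo N b 0 0) = q * χ (appendTwo N b 1 1) := by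
      have h := congrFun h2 (appendTwo N b 1 0)
      simp only [Matrix.add_mulVec, Matrix.smul_mulVec, Pi.add_apply,
        Pi.smul_apply, smul_eq_mul, Pi.zero_apply] at h
      rw [majB N hN χ b 1 0, majC N hN χ b 1 0, f1, f0, bitSign_one] at h
      have h' : (Complex.I * zProdFun N (N - 2) (appendTwo N b 1 0)) *
          (χ (appendTwo N b 0 0) - q * χ (appendTwo N b 1 1)) = 0 := by
        linear_combination h
      have h2' := (mul_eq_zero.mp h').resolve_left
        (mul_ne_zero Complex.I_ne_zero Zne)
      linear_combination h2'
    show contractLast N χ b = 0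
    rw [contractLast]
    rcases hp with rfl | rfl <;> rcases hq with rfl | rfl
    · exact absurd ⟨rfl, rfl⟩ hne
    · linear_combination e2
    · linear_combination e1
    · linear_combination e1

end
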